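/- Let L be a Lie algebra over ℂ with elements r_i, t_{ij} = t_{ji}, s_{ij} = s_{ji} (1 ≤ i < j ≤ 3) satisfying the B₃ holonomy relations. Set c_Δ = r₁ + r₂ + r₃ + Σ_{i<j}(t_{ij} + s_{ij}). Then for any 1 ≤ i < j ≤ 3 and any (y_i, y_j) ∈ ℂ², the three elements c_Δ, r₁ + r₂ + r₃ + t_{ij} + s_{ij}, and y_i t_{ij} + y_j s_{ij} pairwise commute, so their span is an abelian Lie subalgebra. -/

import Mathlib

/-!
For any three distinct indices `a, b, c`, the element
`c_Δ = r a + r b + r c + (t a b + s a b) + (t a c + s a c) + (t b c + s b c)` commutes with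
`r a`, `t a b` and `s a b`: after regrouping its terms, each bracket is a sum of brackets that
vanish by a single holonomy relation. In the same way `r a + r b + r c + t a b + s a b`
commutes with `t a b` and `s a b`. For `Fin 3` both elements are independent of the ordering
of the indices, so the three given elements commute pairwise, and bilinearity of the bracket
extends this to their span.
-/

structure IsTypeBHolonomy {L ι : Type*} [LieRing L] (r : ι → L) (t s : ι → ι → L) : Prop where
  t_symm : ∀ i j, t i j = t j i
  s_symm : ∀ i j, s i j = s j i
  lie_r_rts : ∀ i j, i ≠ j → ⁅r i, r j + t i j + s i j⁆ = 0
  lie_t_rrs : ∀ i j, i ≠ j → ⁅t i j, r i + r j + s i j⁆ = 0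
  lie_s_rrt : ∀ i j, i ≠ j → ⁅s i j, r i + r j + t i j⁆ = 0
  lie_t_tt : ∀ i j k, i ≠ j → i ≠ k → j ≠ k → ⁅t i j, t i k + t j k⁆ = 0
  lie_t_ss : ∀ i j k, i ≠ j → i ≠ k → j ≠ k → ⁅t i j, s i k + s j k⁆ = 0
  lie_s_ts : ∀ i j k, i ≠ j → i ≠ k → j ≠ k → ⁅s i j, t i k + s j k⁆ = 0
  lie_r_t : ∀ i j k, i ≠ j → i ≠ k → j ≠ k → ⁅r i, t j k⁆ = 0
  lie_r_s : ∀ i j k, i ≠ j → i ≠ k → j ≠ k → ⁅r i, s j k⁆ = 0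

def cDelta {L ι : Type*} [LieRing L] (r : ι → L) (t s : ι → ι → L) (a b c : ι) : L :=
  r a + r b + r c + (t a b + s a b) + (t a c + s a c) + (t b c + s b c)

theorem lie_eq_zero_comm {L : Type*} [LieRing L] {x y : L} : ⁅x, y⁆ = 0 ↔ ⁅y, x⁆ = 0 := by
  rw [← lie_skew, neg_eq_zero]

namespace IsTypeBHolonomy

variable {L ι : Type*} [LieRing L] {r : ι → L} {t s : ι → ι → L} {a b c : ι}

theorem of_relations (ht : ∀ i j, t i j = t j i) (hs : ∀ i j, s i j = s j i)
    (h₂ : ∀ i j, i ≠ j →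
      ⁅r i, r j + t i j + s i j⁆ = 0 ∧ ⁅t i j, r i + r j + s i j⁆ = 0 ∧
        ⁅s i j, r i + r j + t i j⁆ = 0)
    (h₃ : ∀ i j k, i ≠ j → i ≠ k → j ≠ k →
      ⁅t i j, t i k + t j k⁆ = 0 ∧ ⁅t i j, s i k + s j k⁆ = 0 ∧ ⁅s i j, t i k + s j k⁆ = 0 ∧
        ⁅r i, t j k⁆ = 0 ∧ ⁅r i, s j k⁆ = 0) :
    IsTypeBHolonomy r t s where
  t_symm := ht
  s_symm := hs
  lie_r_rts i j hij := (h₂ i j hij).1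
  lie_t_rrs i j hij := (h₂ i j hij).2.1
  lie_s_rrt i j hij := (h₂ i j hij).2.2
  lie_t_tt i j k hij hik hjk := (h₃ i j k hij hik hjk).1
  lie_t_ss i j k hij hik hjk := (h₃ i j k hij hik hjk).2.1
  lie_s_ts i j k hij hik hjk := (h₃ i j k hij hik hjk).2.2.1
  lie_r_t i j k hij hik hjk := (h₃ i j k hij hik hjk).2.2.2.1
  lie_r_s i j k hij hik hjk := (h₃ i j k hij hik hjk).2.2.2.2

theorem lie_t_rrrts (h : IsTypeBHolonomy r t s) (hab : a ≠ b) (hac : a ≠ c) (hbc : b ≠ c) :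
    ⁅t a b, r a + r b + r c + t a b + s a b⁆ = 0 := by
  have hrc : ⁅t a b, r c⁆ = 0 :=
    lie_eq_zero_comm.mp (h.lie_r_t c a b hac.symm hbc.symm hab)
  rw [show r a + r b + r c + t a b + s a b = (r a + r b + s a b) + r c + t a b by abel,
    lie_add, lie_add, h.lie_t_rrs a b hab, hrc, lie_self, add_zero, add_zero]

theorem lie_s_rrrts (h : IsTypeBHolonomy r t s) (hab : a ≠ b) (hac : a ≠ c) (hbc : b ≠ c) :
    ⁅s a b, r a + r b + r c + t a b + s a b⁆ = 0 := by
  have hrc : ⁅s a b, r c⁆ = 0 :=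
    lie_eq_zero_comm.mp (h.lie_r_s c a b hac.symm hbc.symm hab)
  rw [show r a + r b + r c + t a b + s a b = (r a + r b + t a b) + r c + s a b by abel,
    lie_add, lie_add, h.lie_s_rrt a b hab, hrc, lie_self, add_zero, add_zero]

theorem lie_r_cDelta (h : IsTypeBHolonomy r t s) (hab : a ≠ b) (hac : a ≠ c) (hbc : b ≠ c) :
    ⁅r a, cDelta r t s a b c⁆ = 0 := by
  rw [show cDelta r t s a b c =
      (r b + t a b + s a b) + (r c + t a c + s a c) + t b c + s b c + r a by
    unfold cDelta; abel]
  simp only [lie_add, h.lie_r_rts a b hab, h.lie_r_rts a c hac, h.lie_r_t a b c hab hac hbc,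
    h.lie_r_s a b c hab hac hbc, lie_self, add_zero]

theorem lie_t_cDelta (h : IsTypeBHolonomy r t s) (hab : a ≠ b) (hac : a ≠ c) (hbc : b ≠ c) :
    ⁅t a b, cDelta r t s a b c⁆ = 0 := by
  rw [show cDelta r t s a b c =
      (r a + r b + r c + t a b + s a b) + (t a c + t b c) + (s a c + s b c) by
    unfold cDelta; abel]
  simp only [lie_add, h.lie_t_rrrts hab hac hbc, h.lie_t_tt a b c hab hac hbc,
    h.lie_t_ss a b c hab hac hbc, add_zero]

theorem lie_s_cDelta (h : IsTypeBHolonomy r t s) (hab : a ≠ b) (hac : a ≠ c) (hbc : b ≠ c) :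
    ⁅s a b, cDelta r t s a b c⁆ = 0 := by
  have hba := h.lie_s_ts b a c hab.symm hbc hac
  rw [h.s_symm b a] at hba
  rw [show cDelta r t s a b c =
      (r a + r b + r c + t a b + s a b) + (t a c + s b c) + (t b c + s a c) by
    unfold cDelta; abel]
  simp only [lie_add, h.lie_s_rrrts hab hac hbc, h.lie_s_ts a b c hab hac hbc, hba,
    add_zero]

end IsTypeBHolonomy

theorem exists_fin_three_ne_ne (a b : Fin 3) : ∃ c, a ≠ c ∧ b ≠ c := by
  revert a b; decide

theorem Fin.sum_univ_three_of_ne {M : Type*} [AddCommMonoid M] (f : Fin 3 → M) {a b c : Fin 3}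
    (hab : a ≠ b) (hac : a ≠ c) (hbc : b ≠ c) : ∑ x, f x = f a + f b + f c := by
  fin_cases a <;> fin_cases b <;> fin_cases c <;> simp_all [Fin.sum_univ_three] <;> abel

theorem fin_three_sum_eq_cDelta {L : Type*} [LieRing L] {r : Fin 3 → L} {t s : Fin 3 → Fin 3 → L}
    (ht : ∀ i j, t i j = t j i) (hs : ∀ i j, s i j = s j i) {a b c : Fin 3}
    (hab : a ≠ b) (hac : a ≠ c) (hbc : b ≠ c) :
    (∑ i, r i) + ∑ i, ∑ j ∈ Finset.univ.filter (fun j => i < j), (t i j + s i j) =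
      cDelta r t s a b c := by
  have hpairs : ∑ i, ∑ j ∈ Finset.univ.filter (fun j => i < j), (t i j + s i j) =
      (t 0 1 + s 0 1) + (t 0 2 + s 0 2) + (t 1 2 + s 1 2) := by
    simp [Fin.sum_univ_three, Finset.sum_filter]
  rw [Fin.sum_univ_three_of_ne r hab hac hbc, hpairs]
  fin_cases a <;> fin_cases b <;> fin_cases c <;> simp at hab hac hbc <;>
    simp only [cDelta, Fin.reduceFinMk, Fin.isValue, ht 1 0, ht 2 0, ht 2 1, hs 1 0, hs 2 0,
      hs 2 1] <;> abel

theorem lie_eq_zero_of_mem_span {R L : Type*} [CommRing R] [LieRing L] [LieAlgebra R L]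
    {S : Set L} (hS : S.Pairwise fun u v => ⁅u, v⁆ = 0) {x y : L}
    (hx : x ∈ Submodule.span R S) (hy : y ∈ Submodule.span R S) : ⁅x, y⁆ = 0 := by
  induction hx, hy using Submodule.span_induction₂ with
  | mem_mem u v hu hv =>
    obtain rfl | huv := eq_or_ne u v
    exacts [lie_self u, hS hu hv huv]
  | zero_left => exact zero_lie _
  | zero_right => exact lie_zero _
  | add_left _ _ _ _ _ _ h₁ h₂ => rw [add_lie, h₁, h₂, add_zero]
  | add_right _ _ _ _ _ _ h₁ h₂ => rw [lie_add, h₁, h₂, add_zero]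
  | smul_left _ _ _ _ _ h => rw [smul_lie, h, smul_zero]
  | smul_right _ _ _ _ _ h => rw [lie_smul, h, smul_zero]

/-- Under the `B₃` holonomy relations, for `i < j` the elements `c_Δ`,
`r₁ + r₂ + r₃ + t_{ij} + s_{ij}` and `y_i t_{ij} + y_j s_{ij}` pairwise
commute, so their span is an abelian Lie subalgebra. -/
theorem b3_A_curve_component_abelian
    {L : Type*} [LieRing L] [LieAlgebra ℂ L]
    (r : Fin 3 → L) (t s : Fin 3 → Fin 3 → L)
    (htsymm : ∀ i j, t i j = t j i) (hssymm : ∀ i j, s i j = s j i)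
    (hB2 : ∀ i j : Fin 3, i ≠ j →
      ⁅r i, r j + t i j + s i j⁆ = 0 ∧
      ⁅t i j, r i + r j + s i j⁆ = 0 ∧
      ⁅s i j, r i + r j + t i j⁆ = 0)
    (hA2 : ∀ i j k : Fin 3, i ≠ j → i ≠ k → j ≠ k →
      ⁅t i j, t i k + t j k⁆ = 0 ∧
      ⁅t i j, s i k + s j k⁆ = 0 ∧
      ⁅s i j, t i k + s j k⁆ = 0 ∧
      ⁅r i, t j k⁆ = 0 ∧ ⁅r i, s j k⁆ = 0)
    (cΔ : L)
    (hcΔ : cΔ = (∑ i, r i) +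
      ∑ i, ∑ j ∈ Finset.univ.filter (fun j => i < j), (t i j + s i j))
    (i j : Fin 3) (hij : i < j) (yi yj : ℂ) :
    ⁅cΔ, (∑ i, r i) + t i j + s i j⁆ = 0 ∧
    ⁅cΔ, yi • t i j + yj • s i j⁆ = 0 ∧
    ⁅(∑ i, r i) + t i j + s i j, yi • t i j + yj • s i j⁆ = 0 ∧
    (∀ x ∈ Submodule.span ℂ
        ({cΔ, (∑ i, r i) + t i j + s i j, yi • t i j + yj • s i j} : Set L),
      ∀ y ∈ Submodule.span ℂ
        ({cΔ, (∑ i, r i) + t i j + s i j, yi • t i j + yj • s i j} : Set L),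
      ⁅x, y⁆ = 0) := by
  have h := IsTypeBHolonomy.of_relations htsymm hssymm hB2 hA2
  obtain ⟨k, hik, hjk⟩ := exists_fin_three_ne_ne i j
  have hij := hij.ne
  have hc {a b c : Fin 3} (hab : a ≠ b) (hac : a ≠ c) (hbc : b ≠ c) : cΔ = cDelta r t s a b c :=
    hcΔ.trans (fin_three_sum_eq_cDelta htsymm hssymm hab hac hbc)
  have hr : ∑ a, r a = r i + r j + r k := Fin.sum_univ_three_of_ne r hij hik hjk
  have hcr {a b c : Fin 3} (hab : a ≠ b) (hac : a ≠ c) (hbc : b ≠ c) : ⁅cΔ, r a⁆ = 0 := by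
    rw [hc hab hac hbc]; exact lie_eq_zero_comm.mp (h.lie_r_cDelta hab hac hbc)
  have hct : ⁅cΔ, t i j⁆ = 0 := by
    rw [hc hij hik hjk]; exact lie_eq_zero_comm.mp (h.lie_t_cDelta hij hik hjk)
  have hcs : ⁅cΔ, s i j⁆ = 0 := by
    rw [hc hij hik hjk]; exact lie_eq_zero_comm.mp (h.lie_s_cDelta hij hik hjk)
  have H1 : ⁅cΔ, (∑ i, r i) + t i j + s i j⁆ = 0 := by
    simp only [hr, lie_add, hcr hij hik hjk, hcr hij.symm hjk hik, hcr hik.symm hjk.symm hij,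
      hct, hcs, add_zero]
  have H2 : ⁅cΔ, yi • t i j + yj • s i j⁆ = 0 := by
    simp only [lie_add, lie_smul, hct, hcs, smul_zero, add_zero]
  have H3 : ⁅(∑ i, r i) + t i j + s i j, yi • t i j + yj • s i j⁆ = 0 := by
    rw [hr, lie_add, lie_smul, lie_smul, lie_eq_zero_comm.mp (h.lie_t_rrrts hij hik hjk),
      lie_eq_zero_comm.mp (h.lie_s_rrrts hij hik hjk), smul_zero, smul_zero, add_zero]
  refine ⟨H1, H2, H3, fun x hx y hy => lie_eq_zero_of_mem_span ?_ hx hy⟩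
  simp only [Set.pairwise_insert, Set.pairwise_singleton, Set.mem_insert_iff,
    Set.mem_singleton_iff, forall_eq_or_imp, forall_eq, H1, H2, H3, lie_eq_zero_comm.mp H1,
    lie_eq_zero_comm.mp H2, lie_eq_zero_comm.mp H3, and_self, implies_true]
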